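/- For every natural number n, every point p = (θ, z) ∈ ℝ × ℂ and every tangent vector v = (τ, w) ∈ ℝ × ℂ, writing (τ', w') for the Fréchet derivative of G_n at p applied to v and (θ', z') = G_n(p), one has τ' + Im(conj(z')·w') = (1 + n·‖z‖²)⁻¹ · (τ + Im(conj(z)·w)). Equivalently, the pullback of the 1-form α under G_n equals (1 + n r²)⁻¹ · α, so G_n preserves the hyperplane field ker α and is a contactomorphism onto its image. -/

import Mathlib

/-!
Write `G_n(θ, z) = (θ, u · z)` with `u = ρ · e^{-inθ}` and `ρ = (1 + n‖z‖²)^{-1/2}` real.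
Then `Im(conj(u z) · d(u z)) = ‖z‖² Im(conj u · du) + ‖u‖² Im(conj z · dz)`, and
`Im(conj u · du) = ‖u‖² d(arg u) = -n ρ² dθ`, so
`G_n^* α = (1 - n ρ² ‖z‖²) dθ + ρ² Im(conj z · dz)`.
Both coefficients equal `ρ² = (1 + n‖z‖²)⁻¹`.
-/

open Complex ComplexConjugate ContinuousLinearMap

/-- `dθ + r² dφ = dθ + x dy - y dx` in the coordinates `z = x + iy`. -/
def contactForm (p v : ℝ × ℂ) : ℝ := v.1 + (conj p.2 * v.2).im

lemma im_conj_mul_mul_add_mul (u du z w : ℂ) :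
    (conj (u * z) * (du * z + u * w)).im =
      ‖z‖ ^ 2 * (conj u * du).im + ‖u‖ ^ 2 * (conj z * w).im := by
  simp only [map_mul, ← normSq_eq_norm_sq, normSq_apply, mul_im, add_im, mul_re, add_re,
    conj_re, conj_im]
  ring

lemma contactForm_fderiv_mul_snd {u : ℝ × ℂ → ℂ} {p : ℝ × ℂ} (hu : DifferentiableAt ℝ u p)
    (v : ℝ × ℂ) :
    contactForm (p.1, u p * p.2) (fderiv ℝ (fun q => (q.1, u q * q.2)) p v) =
      v.1 + ‖p.2‖ ^ 2 * (conj (u p) * fderiv ℝ u p v).im + ‖u p‖ ^ 2 * (conj p.2 * v.2).im := by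
  have hF := hasFDerivAt_fst.prodMk (hu.hasFDerivAt.fun_mul (hasFDerivAt_snd (p := p)))
  rw [hF.fderiv, contactForm]
  simp only [prod_apply, add_apply, FunLike.coe_smul, Pi.smul_apply, coe_fst', coe_snd',
    smul_eq_mul]
  rw [add_comm (u p * _), mul_comm p.2, im_conj_mul_mul_add_mul, add_assoc]

lemma im_conj_mul_fderiv_ofReal_mul_exp {ρ : ℝ × ℂ → ℝ} {p : ℝ × ℂ}
    (hρ : DifferentiableAt ℝ ρ p) (k : ℝ) (v : ℝ × ℂ) :
    (conj (ρ p * exp (-(I * k * p.1))) *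
      fderiv ℝ (fun q : ℝ × ℂ => (ρ q : ℂ) * exp (-(I * k * q.1))) p v).im =
        -k * ρ p ^ 2 * v.1 := by
  have hrot : HasDerivAt (fun θ : ℝ => exp (-(I * k * θ)))
      (-(I * k) * exp (-(I * k * p.1))) p.1 := by
    simpa [mul_comm] using ((((hasDerivAt_id p.1).ofReal_comp).const_mul (I * k)).neg).cexp
  have hu : HasFDerivAt (fun q : ℝ × ℂ => (ρ q : ℂ) * exp (-(I * k * q.1))) _ p :=
    (ofRealCLM.hasFDerivAt.comp p hρ.hasFDerivAt).fun_mul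
      (hrot.hasFDerivAt.comp p hasFDerivAt_fst)
  rw [hu.fderiv]
  simp only [add_apply, FunLike.coe_smul, Pi.smul_apply, coe_comp, Function.comp_apply, coe_fst',
    toSpanSingleton_apply, ofRealCLM_apply, smul_eq_mul, real_smul]
  have hunit : conj (exp (-(I * k * p.1))) * exp (-(I * k * p.1)) = 1 := by
    rw [← exp_conj, ← exp_add]
    simp [conj_I]
  calc _ = ((-(k * ρ p ^ 2 * v.1) : ℝ) * I + (ρ p * fderiv ℝ ρ p v : ℝ) : ℂ).im := by
        congr 1
        rw [map_mul, conj_ofReal]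
        push_cast
        linear_combination ((-(I * k) * (ρ p : ℂ) ^ 2 * v.1 + ρ p * fderiv ℝ ρ p v : ℂ)) * hunit
    _ = -k * ρ p ^ 2 * v.1 := by
        rw [add_im, mul_I_im, ofReal_re, ofReal_im, add_zero]
        ring

lemma contactForm_fderiv_ofReal_mul_exp_mul_snd {ρ : ℝ × ℂ → ℝ} {p : ℝ × ℂ}
    (hρ : DifferentiableAt ℝ ρ p) (k : ℝ) (v : ℝ × ℂ) :
    contactForm (p.1, (ρ p : ℂ) * exp (-(I * k * p.1)) * p.2)
        (fderiv ℝ (fun q : ℝ × ℂ => (q.1, (ρ q : ℂ) * exp (-(I * k * q.1)) * q.2)) p v) =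
      (1 - k * ‖p.2‖ ^ 2 * ρ p ^ 2) * v.1 + ρ p ^ 2 * (conj p.2 * v.2).im := by
  have hu : DifferentiableAt ℝ (fun q : ℝ × ℂ => (ρ q : ℂ) * exp (-(I * k * q.1))) p := by
    fun_prop
  have hnorm : ‖(ρ p : ℂ) * exp (-(I * k * p.1))‖ ^ 2 = ρ p ^ 2 := by
    rw [norm_mul, norm_exp]
    simp only [norm_real, Real.norm_eq_abs, neg_re, mul_re, I_re, ofReal_re, zero_mul, I_im,
      ofReal_im, mul_zero, sub_self, mul_im, one_mul, zero_add, neg_zero, Real.exp_zero,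
      mul_one, sq_abs]
  rw [contactForm_fderiv_mul_snd hu, im_conj_mul_fderiv_ofReal_mul_exp hρ, hnorm]
  ring

lemma sq_rpow_neg_half {x : ℝ} (hx : 0 < x) : (x ^ (-(1 / 2) : ℝ)) ^ 2 = x⁻¹ := by
  rw [← Real.rpow_natCast, ← Real.rpow_mul hx.le]
  norm_num [Real.rpow_neg_one]

/-- For every `n : ℕ`, every point `p = (θ, z) ∈ ℝ × ℂ` and every tangent vector
`v = (τ, w)`, writing `(τ', w')` for the Fréchet derivative of `G_n` at `p` applied to `v`
and `(θ', z') = G_n(p)`, one has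
`τ' + Im(conj(z')·w') = (1 + n‖z‖²)⁻¹ · (τ + Im(conj(z)·w))`;
i.e. the pullback of the contact form `α` under `G_n` is `(1 + n r²)⁻¹ · α`. -/
theorem Gn_pullback_contact_form (n : ℕ) (G : ℝ × ℂ → ℝ × ℂ)
    (hG : G = fun p : ℝ × ℂ =>
      (p.1, (((1 + (n : ℝ) * ‖p.2‖ ^ 2) ^ (-(1 / 2) : ℝ) : ℝ) : ℂ) *
        Complex.exp (-(Complex.I * (n : ℂ) * (p.1 : ℂ))) * p.2))
    (p v : ℝ × ℂ) :
    (fderiv ℝ G p v).1 + ((starRingEnd ℂ) (G p).2 * (fderiv ℝ G p v).2).im =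
      (1 + (n : ℝ) * ‖p.2‖ ^ 2)⁻¹ * (v.1 + ((starRingEnd ℂ) p.2 * v.2).im) := by
  have hpos : 0 < 1 + (n : ℝ) * ‖p.2‖ ^ 2 := by positivity
  have hρ : DifferentiableAt ℝ (fun q : ℝ × ℂ => (1 + (n : ℝ) * ‖q.2‖ ^ 2) ^ (-(1 / 2) : ℝ)) p :=
    (((differentiableAt_snd.norm_sq ℝ).const_mul _).const_add 1).rpow_const (.inl hpos.ne')
  have hpullback := contactForm_fderiv_ofReal_mul_exp_mul_snd hρ n v
  simp only [ofReal_natCast] at hpullback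
  subst hG
  rw [contactForm] at hpullback
  rw [hpullback, sq_rpow_neg_half hpos]
  field_simp
  ring
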